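/- Let V be a complex Banach space with the Bohl–Bohr property, p ∈ ℕ, and let A : ℝ → Matrix (Fin p) (Fin p) ℂ be bounded and continuous with every entry almost automorphic, upper triangular (a_{ij}(t) = 0 for all t whenever i > j), and such that for each k the diagonal entry satisfies a_{kk}(t) = i·β_k(t) with β_k : ℝ → ℝ and t ↦ ∫_0^t β_k(s) ds bounded on ℝ. Let f : ℝ → (Fin p → V) be bounded, continuous and almost automorphic. Then every bounded differentiable solution y : ℝ → (Fin p → V) of the system y_i'(t) = Σ_j a_{ij}(t)·y_j(t) + f_i(t), i = 1,…,p, is almost automorphic. -/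

import Mathlib

/-!
Integrate the system from the last row upwards. Since `A` is upper triangular, row `i` reads
`yᵢ' = i βᵢ yᵢ + gᵢ` with `gᵢ = Σ_{j>i} aᵢⱼ yⱼ + fᵢ`, which is almost automorphic once the
later components are. With `Bᵢ = ∫₀ᵗ βᵢ` the unimodular gauge `e^{-i Bᵢ}` turns this into
`(e^{-i Bᵢ} yᵢ)' = e^{-i Bᵢ} gᵢ`. The primitive on the left is bounded because `yᵢ` is, so the
Bohl–Bohr property makes it almost automorphic, and `yᵢ = e^{i Bᵢ}(e^{-i Bᵢ} yᵢ)` is almost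
automorphic too. `Bᵢ` itself is almost automorphic by the Bohl–Bohr property applied to `βᵢ v`
for a fixed `v ≠ 0`; a trivial `V` has nothing to prove.
-/

open MeasureTheory Filter Topology

attribute [local instance] Matrix.linftyOpNormedAddCommGroup Matrix.linftyOpNormedRing
  Matrix.linftyOpNormedAlgebra

/-- A continuous function `ψ : ℝ → V` into a Banach space is almost automorphic if for every
sequence of reals there is a subsequence `(τₙ)` and a function `ψ̃` with
`ψ(t+τₙ) → ψ̃(t)` and `ψ̃(t−τₙ) → ψ(t)` pointwise on `ℝ`. -/
def AlmostAutomorphic {V : Type*} [NormedAddCommGroup V] (ψ : ℝ → V) : Prop :=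
  Continuous ψ ∧ ∀ σ : ℕ → ℝ, ∃ k : ℕ → ℕ, StrictMono k ∧ ∃ ψt : ℝ → V,
    (∀ t : ℝ, Tendsto (fun n => ψ (t + σ (k n))) atTop (𝓝 (ψt t))) ∧
    (∀ t : ℝ, Tendsto (fun n => ψt (t - σ (k n))) atTop (𝓝 (ψ t)))

/-- A Banach space `V` has the Bohl–Bohr property if every bounded primitive of an
almost automorphic function `ℝ → V` is almost automorphic. -/
def BohlBohrSpace (V : Type*) [NormedAddCommGroup V] [NormedSpace ℂ V] : Prop :=
  ∀ f : ℝ → V, AlmostAutomorphic f →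
    (∃ C, ∀ t : ℝ, ‖∫ s in (0 : ℝ)..t, f s‖ ≤ C) →
    AlmostAutomorphic (fun t => ∫ s in (0 : ℝ)..t, f s)

def HasBochnerLimit {V : Type*} [NormedAddCommGroup V] (ψ : ℝ → V) (σ : ℕ → ℝ)
    (ψt : ℝ → V) : Prop :=
  (∀ t, Tendsto (fun n => ψ (t + σ n)) atTop (𝓝 (ψt t))) ∧
    ∀ t, Tendsto (fun n => ψt (t - σ n)) atTop (𝓝 (ψ t))

section AlmostAutomorphic

variable {V W : Type*} [NormedAddCommGroup V] [NormedAddCommGroup W]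

namespace HasBochnerLimit

variable {ψ ψt : ℝ → V} {σ : ℕ → ℝ}

theorem comp_strictMono (h : HasBochnerLimit ψ σ ψt) {k : ℕ → ℕ} (hk : StrictMono k) :
    HasBochnerLimit ψ (σ ∘ k) ψt :=
  ⟨fun t => (h.1 t).comp hk.tendsto_atTop, fun t => (h.2 t).comp hk.tendsto_atTop⟩

theorem map (h : HasBochnerLimit ψ σ ψt) {F : V → W} (hF : Continuous F) :
    HasBochnerLimit (fun t => F (ψ t)) σ (fun t => F (ψt t)) :=
  ⟨fun t => (hF.tendsto _).comp (h.1 t), fun t => (hF.tendsto _).comp (h.2 t)⟩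

theorem prodMk (h : HasBochnerLimit ψ σ ψt) {φ φt : ℝ → W} (h' : HasBochnerLimit φ σ φt) :
    HasBochnerLimit (fun t => (ψ t, φ t)) σ (fun t => (ψt t, φt t)) :=
  ⟨fun t => (h.1 t).prodMk_nhds (h'.1 t), fun t => (h.2 t).prodMk_nhds (h'.2 t)⟩

theorem pi {ι : Type*} [Fintype ι] {ψ ψt : ι → ℝ → V} (h : ∀ i, HasBochnerLimit (ψ i) σ (ψt i)) :
    HasBochnerLimit (fun t i => ψ i t) σ (fun t i => ψt i t) :=
  ⟨fun t => tendsto_pi_nhds.2 fun i => (h i).1 t, fun t => tendsto_pi_nhds.2 fun i => (h i).2 t⟩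

end HasBochnerLimit

theorem almostAutomorphic_iff {ψ : ℝ → V} : AlmostAutomorphic ψ ↔
    Continuous ψ ∧ ∀ σ : ℕ → ℝ, ∃ k : ℕ → ℕ, StrictMono k ∧ ∃ ψt, HasBochnerLimit ψ (σ ∘ k) ψt :=
  Iff.rfl

theorem almostAutomorphic_const (c : V) : AlmostAutomorphic fun _ => c :=
  almostAutomorphic_iff.2 ⟨continuous_const, fun _ => ⟨id, strictMono_id, fun _ => c,
    fun _ => tendsto_const_nhds, fun _ => tendsto_const_nhds⟩⟩

theorem Continuous.comp_almostAutomorphic {F : V → W} (hF : Continuous F) {ψ : ℝ → V}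
    (h : AlmostAutomorphic ψ) : AlmostAutomorphic fun t => F (ψ t) := by
  refine almostAutomorphic_iff.2 ⟨hF.comp h.1, fun σ => ?_⟩
  obtain ⟨k, hk, ψt, hψ⟩ := almostAutomorphic_iff.1 h |>.2 σ
  exact ⟨k, hk, _, hψ.map hF⟩

namespace AlmostAutomorphic

theorem continuous {ψ : ℝ → V} (h : AlmostAutomorphic ψ) : Continuous ψ := h.1

theorem prodMk {ψ : ℝ → V} {φ : ℝ → W} (hψ : AlmostAutomorphic ψ) (hφ : AlmostAutomorphic φ) :
    AlmostAutomorphic fun t => (ψ t, φ t) := by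
  refine almostAutomorphic_iff.2 ⟨hψ.1.prodMk hφ.1, fun σ => ?_⟩
  obtain ⟨k, hk, ψt, hψt⟩ := almostAutomorphic_iff.1 hψ |>.2 σ
  obtain ⟨k', hk', φt, hφt⟩ := almostAutomorphic_iff.1 hφ |>.2 (σ ∘ k)
  exact ⟨k ∘ k', hk.comp hk', _, (hψt.comp_strictMono hk').prodMk hφt⟩

theorem add {ψ φ : ℝ → V} (hψ : AlmostAutomorphic ψ) (hφ : AlmostAutomorphic φ) :
    AlmostAutomorphic fun t => ψ t + φ t :=
  continuous_add.comp_almostAutomorphic (hψ.prodMk hφ)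

theorem smul {𝕜 : Type*} [NormedField 𝕜] [NormedSpace 𝕜 V] {a : ℝ → 𝕜} {ψ : ℝ → V}
    (ha : AlmostAutomorphic a) (hψ : AlmostAutomorphic ψ) :
    AlmostAutomorphic fun t => a t • ψ t :=
  continuous_smul.comp_almostAutomorphic (ha.prodMk hψ)

end AlmostAutomorphic

theorem almostAutomorphic_finset_sum {ι : Type*} (s : Finset ι) {ψ : ι → ℝ → V}
    (h : ∀ i ∈ s, AlmostAutomorphic (ψ i)) : AlmostAutomorphic fun t => ∑ i ∈ s, ψ i t := by
  classical
  induction s using Finset.induction_on with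
  | empty => simpa using almostAutomorphic_const (0 : V)
  | insert a s has ih =>
    simp only [Finset.sum_insert has]
    exact (h a (s.mem_insert_self a)).add (ih fun i hi => h i (Finset.mem_insert_of_mem hi))

theorem exists_strictMono_forall_mem_hasBochnerLimit {ι : Type*} (s : Finset ι) {ψ : ι → ℝ → V}
    (h : ∀ i, AlmostAutomorphic (ψ i)) (σ : ℕ → ℝ) :
    ∃ k : ℕ → ℕ, StrictMono k ∧ ∀ i ∈ s, ∃ ψt, HasBochnerLimit (ψ i) (σ ∘ k) ψt := by
  classical
  induction s using Finset.induction_on with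
  | empty => exact ⟨id, strictMono_id, by simp⟩
  | insert a s _ ih =>
    obtain ⟨k, hk, hs⟩ := ih
    obtain ⟨k', hk', ψt, ha⟩ := almostAutomorphic_iff.1 (h a) |>.2 (σ ∘ k)
    refine ⟨k ∘ k', hk.comp hk', fun i hi => ?_⟩
    rcases Finset.mem_insert.1 hi with rfl | hi
    · exact ⟨ψt, ha⟩
    · obtain ⟨ψt', hi⟩ := hs i hi
      exact ⟨ψt', hi.comp_strictMono hk'⟩

theorem almostAutomorphic_pi {ι : Type*} [Fintype ι] {ψ : ι → ℝ → V}
    (h : ∀ i, AlmostAutomorphic (ψ i)) : AlmostAutomorphic fun t i => ψ i t := by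
  refine almostAutomorphic_iff.2 ⟨continuous_pi fun i => (h i).1, fun σ => ?_⟩
  obtain ⟨k, hk, hlim⟩ := exists_strictMono_forall_mem_hasBochnerLimit Finset.univ h σ
  choose ψt hψt using fun i => hlim i (Finset.mem_univ i)
  exact ⟨k, hk, _, HasBochnerLimit.pi hψt⟩

end AlmostAutomorphic

open Complex

section ComplexBanach

variable {V : Type*} [NormedAddCommGroup V] [NormedSpace ℂ V]

theorem HasDerivAt.cexp_neg_ofReal_mul_I_smul {B : ℝ → ℝ} {b t : ℝ} {u : ℝ → V} {g : V}
    (hB : HasDerivAt B b t) (hu : HasDerivAt u ((I * b) • u t + g) t) :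
    HasDerivAt (fun s => Complex.exp (↑(-B s) * I) • u s) (Complex.exp (↑(-B t) * I) • g) t := by
  convert (hB.neg.ofReal_comp.mul_const I).cexp.smul hu using 1
  · rfl
  · simp only [Pi.neg_apply]
    module

namespace BohlBohrSpace

variable [CompleteSpace V]

theorem almostAutomorphic_integral_real [Nontrivial V] (hV : BohlBohrSpace V) {g : ℝ → ℝ}
    (hg : AlmostAutomorphic g) (hgb : ∃ C, ∀ t, |∫ s in (0 : ℝ)..t, g s| ≤ C) :
    AlmostAutomorphic fun t => ∫ s in (0 : ℝ)..t, g s := by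
  obtain ⟨v, hv⟩ := exists_ne (0 : V)
  obtain ⟨φ, hφv⟩ := SeparatingDual.exists_eq_one (R := ℂ) hv
  obtain ⟨C, hC⟩ := hgb
  have hprim : ∀ t, ∫ s in (0 : ℝ)..t, g s • v = (∫ s in (0 : ℝ)..t, g s) • v := fun t =>
    intervalIntegral.integral_smul_const _ _
  have hgv : AlmostAutomorphic fun t => g t • v :=
    (continuous_id.smul continuous_const : Continuous fun x : ℝ => x • v).comp_almostAutomorphic hg
  have hbound : ∃ C, ∀ t, ‖∫ s in (0 : ℝ)..t, g s • v‖ ≤ C :=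
    ⟨C * ‖v‖, fun t => by
      rw [hprim, norm_smul, Real.norm_eq_abs]
      exact mul_le_mul_of_nonneg_right (hC t) (norm_nonneg v)⟩
  have hG := (continuous_re.comp φ.continuous).comp_almostAutomorphic (hV _ hgv hbound)
  simpa [hprim, hφv] using hG

theorem almostAutomorphic_of_hasDerivAt_I_mul_smul_add (hV : BohlBohrSpace V) {b : ℝ → ℝ}
    (hb : Continuous b) (hB : AlmostAutomorphic fun t => ∫ s in (0 : ℝ)..t, b s)
    {g : ℝ → V} (hg : AlmostAutomorphic g) {u : ℝ → V}
    (hu : ∀ t, HasDerivAt u ((I * b t) • u t + g t) t) (hub : ∃ C, ∀ t, ‖u t‖ ≤ C) :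
    AlmostAutomorphic u := by
  obtain ⟨C, hC⟩ := hub
  set E : ℝ → ℂ := fun t => exp (↑(-∫ s in (0 : ℝ)..t, b s) * I)
  have hgauge : Continuous fun x : ℝ => exp (↑(-x) * I) := by fun_prop
  have hE : AlmostAutomorphic E := hgauge.comp_almostAutomorphic hB
  have hEinv : AlmostAutomorphic fun t => (E t)⁻¹ :=
    (hgauge.inv₀ fun _ => exp_ne_zero _).comp_almostAutomorphic hB
  have hEu_deriv : ∀ t, HasDerivAt (fun s => E s • u s) (E t • g t) t := fun t =>
    HasDerivAt.cexp_neg_ofReal_mul_I_smul (hb.integral_hasStrictDerivAt 0 t).hasDerivAt (hu t)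
  have hEg_int : ∀ t, ∫ s in (0 : ℝ)..t, E s • g s = E t • u t - E 0 • u 0 := fun t =>
    intervalIntegral.integral_eq_sub_of_hasDerivAt (fun s _ => hEu_deriv s)
      ((hE.continuous.smul hg.continuous).intervalIntegrable 0 t)
  have hEu_le : ∀ t, ‖E t • u t‖ ≤ C := fun t => by
    rw [norm_smul, norm_exp_ofReal_mul_I, one_mul]
    exact hC t
  have hprim : AlmostAutomorphic fun t => ∫ s in (0 : ℝ)..t, E s • g s :=
    hV _ (hE.smul hg) ⟨C + C, fun t => by
      rw [hEg_int]
      exact (norm_sub_le _ _).trans (add_le_add (hEu_le t) (hEu_le 0))⟩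
  have hu_eq : u = fun t => (E t)⁻¹ • (E 0 • u 0 + ∫ s in (0 : ℝ)..t, E s • g s) := by
    funext t
    rw [hEg_int, add_sub_cancel, smul_smul, inv_mul_cancel₀ (exp_ne_zero _), one_smul]
  rw [hu_eq]
  exact hEinv.smul ((almostAutomorphic_const _).add hprim)

end BohlBohrSpace

end ComplexBanach

theorem Finset.sum_eq_add_sum_Ioi_of_eq_zero_of_lt {ι M : Type*} [Fintype ι] [LinearOrder ι]
    [LocallyFiniteOrderTop ι] [AddCommMonoid M] {f : ι → M} {i : ι} (h : ∀ j < i, f j = 0) :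
    ∑ j, f j = f i + ∑ j ∈ Ioi i, f j := by
  rw [← sum_filter_of_ne (p := (i ≤ ·)) fun j _ hj => not_lt.1 fun hji => hj (h j hji),
    filter_le_eq_Ici, ← sum_Ioi_add_eq_sum_Ici, add_comm]

theorem massera_triangular_system_imaginary_diagonal
    {V : Type*} [NormedAddCommGroup V] [NormedSpace ℂ V] [CompleteSpace V] {p : ℕ}
    (hV : BohlBohrSpace V)
    (A : ℝ → Matrix (Fin p) (Fin p) ℂ)
    (hAaa : ∀ i j : Fin p, AlmostAutomorphic (fun t => A t i j))
    (htri : ∀ (t : ℝ) (i j : Fin p), j < i → A t i j = 0)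
    (β : Fin p → ℝ → ℝ)
    (hdiag : ∀ (k : Fin p) (t : ℝ), A t k k = Complex.I * (β k t : ℂ))
    (hβprim : ∀ k : Fin p, ∃ C, ∀ t : ℝ, |∫ s in (0 : ℝ)..t, β k s| ≤ C)
    (f : ℝ → (Fin p → V))
    (hfaa : AlmostAutomorphic f)
    (y : ℝ → (Fin p → V))
    (hy : ∀ (t : ℝ) (i : Fin p),
      HasDerivAt (fun t => y t i) ((∑ j : Fin p, A t i j • y t j) + f t i) t)
    (hyb : ∃ C, ∀ t : ℝ, ‖y t‖ ≤ C) :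
    AlmostAutomorphic y := by
  rcases subsingleton_or_nontrivial V with _ | _
  · exact Subsingleton.elim (fun _ => 0) y ▸ almostAutomorphic_const 0
  refine almostAutomorphic_pi fun i => ?_
  induction i using WellFoundedGT.induction with | _ i ih => ?_
  have hβ : β i = fun t => (A t i i).im := funext fun t => by simp [hdiag]
  have hβaa : AlmostAutomorphic (β i) := hβ ▸ continuous_im.comp_almostAutomorphic (hAaa i i)
  have hrow : ∀ t, HasDerivAt (fun t => y t i)
      ((I * β i t) • y t i + (∑ j ∈ Finset.Ioi i, A t i j • y t j + f t i)) t := fun t => by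
    have hsplit := Finset.sum_eq_add_sum_Ioi_of_eq_zero_of_lt (f := fun j => A t i j • y t j)
      fun j hj => by rw [htri t i j hj, zero_smul]
    simpa only [hsplit, hdiag, add_assoc] using hy t i
  obtain ⟨C, hC⟩ := hyb
  refine hV.almostAutomorphic_of_hasDerivAt_I_mul_smul_add hβaa.continuous
    (hV.almostAutomorphic_integral_real hβaa (hβprim i)) ?_ hrow
    ⟨C, fun t => (norm_le_pi_norm (y t) i).trans (hC t)⟩
  exact (almostAutomorphic_finset_sum _ fun j hj =>
      (hAaa i j).smul (ih j (Finset.mem_Ioi.1 hj))).add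
    ((continuous_apply i).comp_almostAutomorphic hfaa)
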